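/- Let D ≥ 2, N ≥ 1, and r ∈ [1,∞). There is a constant C = C(D, r) such that for every L ≥ 0, every L-Lipschitz function g : ℝ^{D−1} → ℝ^N, every j ∈ ℕ, ε > 0, and every x₀ = (x_0, x) ∈ ℝ^D: ∫_{ℝ^{D−1}} |g(x) − g(y)|^r (χ^{j,ε}_y(x₀))^r dy ≤ C L^r 2^{εj((D−1)(r−1) − r)}. -/

import Mathlib

open MeasureTheory

/-- The Gaussian window `χ̃^{j,ε}_y(x₀, x)` on `ℝ × ℝ^{D-1}` (here `d = D - 1`). -/
noncomputable def chiTilde (d j : ℕ) (ε : ℝ) (y : EuclideanSpace ℝ (Fin d))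
    (x0 : ℝ) (x : EuclideanSpace ℝ (Fin d)) : ℝ :=
  Real.pi ^ (-((d : ℝ) + 1) / 4) * Real.exp (-x0 ^ 2 / 2) *
    (2 : ℝ) ^ (ε * (j : ℝ) * (d : ℝ) / 2) *
    ∏ k : Fin d, Real.exp (-(2 : ℝ) ^ (2 * ε * (j : ℝ)) * (x k - y k) ^ 2 / 2)

/-- The Gaussian window `χ^{j,ε}_y = (χ̃^{j,ε}_y)²`. -/
noncomputable def chiW (d j : ℕ) (ε : ℝ) (y : EuclideanSpace ℝ (Fin d))
    (x0 : ℝ) (x : EuclideanSpace ℝ (Fin d)) : ℝ :=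
  (chiTilde d j ε y x0 x) ^ 2

/-!
Write `s = 2^{εj}`. Squaring the window gives
`χ^{j,ε}_y(x₀) ≤ π^{-D/2} s^{D-1} exp (-s² |x - y|²)`, and `|g x - g y|^r ≤ L^r |x - y|^r`.
The elementary bound `u^r ≤ e^{r²/2} e^{u²/2}` at `u = s |x - y|` trades `|x - y|^r` for `s^{-r}`
at the cost of half of the Gaussian decay (this is where `r ≥ 1` enters), and the remaining
Gaussian `exp (-s² |x - y|² / 2)` integrates to `(2π)^{(D-1)/2} s^{-(D-1)}`.
-/

open Real

lemma lintegral_ofReal_exp_neg_mul_norm_sub_sq {V : Type*} [NormedAddCommGroup V]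
    [InnerProductSpace ℝ V] [FiniteDimensional ℝ V] [MeasurableSpace V] [BorelSpace V]
    {b : ℝ} (hb : 0 < b) (x : V) :
    ∫⁻ y : V, ENNReal.ofReal (exp (-b * ‖x - y‖ ^ 2)) =
      ENNReal.ofReal ((π / b) ^ ((Module.finrank ℝ V : ℝ) / 2)) := by
  have hint : ∫ v : V, exp (-b * ‖v‖ ^ 2) = (π / b) ^ ((Module.finrank ℝ V : ℝ) / 2) :=
    GaussianFourier.integral_rexp_neg_mul_sq_norm hb
  have hI : Integrable fun v : V => exp (-b * ‖v‖ ^ 2) :=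
    .of_integral_ne_zero (by rw [hint]; positivity)
  rw [← ofReal_integral_eq_lintegral_ofReal (hI.comp_sub_left x)
      (.of_forall fun _ => (exp_pos _).le),
    integral_sub_left_eq_self (fun v => exp (-b * ‖v‖ ^ 2)) volume x, hint]

lemma rpow_le_exp_sq_div_two_mul_exp_sq_div_two {u r : ℝ} (hu : 0 ≤ u) (hr : 0 ≤ r) :
    u ^ r ≤ exp (r ^ 2 / 2) * exp (u ^ 2 / 2) := by
  have hu_le : u ≤ exp u := by linarith [add_one_le_exp u]
  calc u ^ r ≤ exp u ^ r := rpow_le_rpow hu hu_le hr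
    _ = exp (u * r) := (exp_mul u r).symm
    _ ≤ exp (r ^ 2 / 2 + u ^ 2 / 2) := exp_le_exp.mpr (by nlinarith [sq_nonneg (u - r)])
    _ = exp (r ^ 2 / 2) * exp (u ^ 2 / 2) := exp_add _ _

lemma rpow_mul_exp_neg_mul_sq_le {a t r : ℝ} (ha : 0 < a) (ht : 0 ≤ t) (hr : 1 ≤ r) :
    t ^ r * exp (-(r * a ^ 2) * t ^ 2) ≤
      exp (r ^ 2 / 2) * a ^ (-r) * exp (-(a ^ 2 / 2) * t ^ 2) := by
  have ht_eq : t ^ r = a ^ (-r) * (a * t) ^ r := by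
    rw [mul_rpow ha.le ht, ← mul_assoc, ← rpow_add ha, neg_add_cancel, rpow_zero, one_mul]
  have hdecay : (a * t) ^ 2 / 2 + -(r * a ^ 2) * t ^ 2 ≤ -(a ^ 2 / 2) * t ^ 2 := by
    nlinarith [mul_nonneg (sq_nonneg a) (sq_nonneg t)]
  calc t ^ r * exp (-(r * a ^ 2) * t ^ 2)
      ≤ a ^ (-r) * (exp (r ^ 2 / 2) * exp ((a * t) ^ 2 / 2)) * exp (-(r * a ^ 2) * t ^ 2) := by
        rw [ht_eq]
        gcongr
        exact rpow_le_exp_sq_div_two_mul_exp_sq_div_two (by positivity) (by linarith)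
    _ = exp (r ^ 2 / 2) * a ^ (-r) * exp ((a * t) ^ 2 / 2 + -(r * a ^ 2) * t ^ 2) := by
        rw [exp_add]; ring
    _ ≤ exp (r ^ 2 / 2) * a ^ (-r) * exp (-(a ^ 2 / 2) * t ^ 2) := by gcongr

lemma chiW_eq (d j : ℕ) (ε : ℝ) (y : EuclideanSpace ℝ (Fin d)) (x0 : ℝ)
    (x : EuclideanSpace ℝ (Fin d)) :
    chiW d j ε y x0 x = π ^ (-((d : ℝ) + 1) / 2) * exp (-x0 ^ 2) *
      (2 : ℝ) ^ (ε * j * d) * exp (-(2 : ℝ) ^ (2 * ε * j) * ‖x - y‖ ^ 2) := by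
  have hprod : ∏ k : Fin d, exp (-(2 : ℝ) ^ (2 * ε * j) * (x k - y k) ^ 2 / 2) =
      exp (-(2 : ℝ) ^ (2 * ε * j) * ‖x - y‖ ^ 2 / 2) := by
    rw [← exp_sum, EuclideanSpace.norm_sq_eq, Finset.mul_sum, Finset.sum_div]
    simp
  have hsq_rpow {b : ℝ} (hb : 0 ≤ b) (e : ℝ) : (b ^ (e / 2)) ^ 2 = b ^ e := by
    rw [← rpow_natCast, ← rpow_mul hb]; norm_num
  have hsq_exp (e : ℝ) : exp (e / 2) ^ 2 = exp e := by
    rw [sq, ← exp_add, add_halves]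
  rw [chiW, chiTilde, hprod, mul_pow, mul_pow, mul_pow, hsq_exp, hsq_exp,
    ← hsq_rpow pi_nonneg (-((d : ℝ) + 1) / 2), ← hsq_rpow zero_le_two (ε * j * d)]
  ring_nf

lemma chiW_rpow_le (d j : ℕ) (ε : ℝ) (y : EuclideanSpace ℝ (Fin d)) (x0 : ℝ)
    (x : EuclideanSpace ℝ (Fin d)) {r : ℝ} (hr : 0 ≤ r) :
    chiW d j ε y x0 x ^ r ≤ π ^ (-((d : ℝ) + 1) * r / 2) *
      (2 : ℝ) ^ (ε * j * d * r) * exp (-(r * (2 : ℝ) ^ (2 * ε * j)) * ‖x - y‖ ^ 2) := by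
  have hx0 : exp (-x0 ^ 2 * r) ≤ 1 := exp_le_one_iff.mpr (by nlinarith)
  rw [chiW_eq, mul_rpow (by positivity) (by positivity), mul_rpow (by positivity) (by positivity),
    mul_rpow (by positivity) (by positivity), ← rpow_mul pi_nonneg, ← rpow_mul zero_le_two,
    ← exp_mul, ← exp_mul]
  calc _ ≤ π ^ (-((d : ℝ) + 1) / 2 * r) * 1 * 2 ^ (ε * j * d * r) *
        exp (-2 ^ (2 * ε * j) * ‖x - y‖ ^ 2 * r) := by gcongr
    _ = _ := by ring_nf

lemma norm_sub_rpow_mul_chiW_rpow_le {d : ℕ} {F : Type*} [NormedAddCommGroup F]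
    {g : EuclideanSpace ℝ (Fin d) → F} {L r : ℝ} (hL : 0 ≤ L) (hr : 1 ≤ r) (j : ℕ) (ε : ℝ)
    (y : EuclideanSpace ℝ (Fin d)) (x0 : ℝ) (x : EuclideanSpace ℝ (Fin d))
    (hg : ‖g x - g y‖ ≤ L * ‖x - y‖) :
    ‖g x - g y‖ ^ r * chiW d j ε y x0 x ^ r ≤
      π ^ (-((d : ℝ) + 1) * r / 2) * exp (r ^ 2 / 2) * L ^ r *
        ((2 : ℝ) ^ (ε * j)) ^ ((d : ℝ) * r - r) *
        exp (-(((2 : ℝ) ^ (ε * j)) ^ 2 / 2) * ‖x - y‖ ^ 2) := by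
  set a : ℝ := (2 : ℝ) ^ (ε * j) with ha_def
  have ha : 0 < a := by positivity
  have ha_sq : (2 : ℝ) ^ (2 * ε * j) = a ^ 2 := by
    rw [ha_def, ← rpow_mul_natCast zero_le_two]; ring_nf
  have ha_pow : (2 : ℝ) ^ (ε * j * d * r) = a ^ ((d : ℝ) * r) := by
    rw [ha_def, ← rpow_mul zero_le_two]; ring_nf
  have hg_rpow : ‖g x - g y‖ ^ r ≤ L ^ r * ‖x - y‖ ^ r := by
    rw [← mul_rpow hL (norm_nonneg _)]
    exact rpow_le_rpow (norm_nonneg _) hg (by linarith)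
  have hchi := chiW_rpow_le d j ε y x0 x (r := r) (by linarith)
  rw [ha_sq, ha_pow] at hchi
  calc ‖g x - g y‖ ^ r * chiW d j ε y x0 x ^ r
      ≤ L ^ r * ‖x - y‖ ^ r * (π ^ (-((d : ℝ) + 1) * r / 2) * a ^ ((d : ℝ) * r) *
          exp (-(r * a ^ 2) * ‖x - y‖ ^ 2)) :=
        mul_le_mul hg_rpow hchi (rpow_nonneg (sq_nonneg _) r) (by positivity)
    _ = π ^ (-((d : ℝ) + 1) * r / 2) * L ^ r * a ^ ((d : ℝ) * r) *
          (‖x - y‖ ^ r * exp (-(r * a ^ 2) * ‖x - y‖ ^ 2)) := by ring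
    _ ≤ π ^ (-((d : ℝ) + 1) * r / 2) * L ^ r * a ^ ((d : ℝ) * r) *
          (exp (r ^ 2 / 2) * a ^ (-r) * exp (-(a ^ 2 / 2) * ‖x - y‖ ^ 2)) := by
        gcongr _ * ?_
        exact rpow_mul_exp_neg_mul_sq_le ha (norm_nonneg _) hr
    _ = _ := by
        rw [show (d : ℝ) * r - r = d * r + -r by ring, rpow_add ha]; ring

lemma two_rpow_scale_mul_gaussian_integral_eq (d : ℕ) (r u : ℝ) :
    ((2 : ℝ) ^ u) ^ ((d : ℝ) * r - r) * (π / (((2 : ℝ) ^ u) ^ 2 / 2)) ^ ((d : ℝ) / 2) =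
      (2 * π) ^ ((d : ℝ) / 2) * (2 : ℝ) ^ (u * ((d : ℝ) * (r - 1) - r)) := by
  have h2u : (0 : ℝ) < 2 ^ u := by positivity
  have hdiv : π / (((2 : ℝ) ^ u) ^ 2 / 2) = 2 * π * ((2 : ℝ) ^ u) ^ (-2 : ℝ) := by
    rw [rpow_neg h2u.le, rpow_two]; field_simp
  rw [hdiv, mul_rpow (by positivity) (by positivity), ← rpow_mul h2u.le, mul_left_comm,
    ← rpow_add h2u, ← rpow_mul zero_le_two]
  ring_nf

theorem stmt10_general (d N : ℕ) (r : ℝ) (hr : 1 ≤ r) :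
    ∃ C : ℝ, 0 < C ∧
      ∀ (L : ℝ), 0 ≤ L →
        ∀ g : EuclideanSpace ℝ (Fin d) → EuclideanSpace ℝ (Fin N),
          (∀ x y, ‖g x - g y‖ ≤ L * ‖x - y‖) →
          ∀ (j : ℕ) (ε : ℝ), 0 < ε →
            ∀ (x0 : ℝ) (x : EuclideanSpace ℝ (Fin d)),
              (∫⁻ y : EuclideanSpace ℝ (Fin d),
                  ENNReal.ofReal (‖g x - g y‖ ^ r * chiW d j ε y x0 x ^ r)) ≤
                ENNReal.ofReal
                  (C * L ^ r * (2 : ℝ) ^ (ε * (j : ℝ) * ((d : ℝ) * (r - 1) - r))) := by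
  refine ⟨π ^ (-((d : ℝ) + 1) * r / 2) * exp (r ^ 2 / 2) * (2 * π) ^ ((d : ℝ) / 2),
    by positivity, fun L hL g hg j ε _ x0 x => ?_⟩
  set a : ℝ := (2 : ℝ) ^ (ε * j)
  set K := π ^ (-((d : ℝ) + 1) * r / 2) * exp (r ^ 2 / 2) * L ^ r * a ^ ((d : ℝ) * r - r)
  have hK : 0 ≤ K := by positivity
  calc _ ≤ ∫⁻ y, ENNReal.ofReal K * ENNReal.ofReal (exp (-(a ^ 2 / 2) * ‖x - y‖ ^ 2)) :=
        lintegral_mono fun y => by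
          rw [← ENNReal.ofReal_mul hK]
          exact ENNReal.ofReal_le_ofReal (norm_sub_rpow_mul_chiW_rpow_le hL hr j ε y x0 x (hg x y))
    _ = ENNReal.ofReal K * ENNReal.ofReal ((π / (a ^ 2 / 2)) ^ ((d : ℝ) / 2)) := by
        rw [lintegral_const_mul' _ _ ENNReal.ofReal_ne_top,
          lintegral_ofReal_exp_neg_mul_norm_sub_sq (by positivity), finrank_euclideanSpace_fin]
    _ = _ := by
        rw [← ENNReal.ofReal_mul hK]
        congr 1
        linear_combination π ^ (-((d : ℝ) + 1) * r / 2) * exp (r ^ 2 / 2) * L ^ r *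
          two_rpow_scale_mul_gaussian_integral_eq d r (ε * j)

/-- For `D = d + 1 ≥ 2`, `N ≥ 1`, `r ∈ [1,∞)` there is `C = C(D,r)` such
that for every `L`-Lipschitz `g : ℝ^{D-1} → ℝ^N` (`L ≥ 0`), all `j ∈ ℕ`, `ε > 0`, and
`x₀ = (x_0, x)`:
`∫_{ℝ^{D-1}} |g(x) - g(y)|^r (χ^{j,ε}_y(x₀))^r dy ≤ C L^r 2^{εj((D-1)(r-1) - r)}`. -/
theorem stmt10 (d N : ℕ) (hd : 1 ≤ d) (hN : 1 ≤ N) (r : ℝ) (hr : 1 ≤ r) :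
    ∃ C : ℝ, 0 < C ∧
      ∀ (L : ℝ), 0 ≤ L →
        ∀ g : EuclideanSpace ℝ (Fin d) → EuclideanSpace ℝ (Fin N),
          (∀ x y, ‖g x - g y‖ ≤ L * ‖x - y‖) →
          ∀ (j : ℕ) (ε : ℝ), 0 < ε →
            ∀ (x0 : ℝ) (x : EuclideanSpace ℝ (Fin d)),
              (∫⁻ y : EuclideanSpace ℝ (Fin d),
                  ENNReal.ofReal (‖g x - g y‖ ^ r * chiW d j ε y x0 x ^ r)) ≤
                ENNReal.ofReal
                  (C * L ^ r * (2 : ℝ) ^ (ε * (j : ℝ) * ((d : ℝ) * (r - 1) - r))) :=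
  stmt10_general d N r hr
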